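/- arXiv:1608.03925 — 2 statements merged into one kernel-verified Lean document; each statement's English description precedes it below -/
import Mathlib

section
/- Fix an integer r ≥ 1 and a smooth function L : ℝ → ℝ. For every ε > 0 there exists δ > 0 with the following property: for every C^r function ξ̄ : ℝ → ℝ such that for every 0 ≤ j ≤ r and every x ∈ [0,1] the j-th derivative of the map y ↦ ξ̄(y) − y at x has absolute value < δ, the map ξ₀ : ℝ² → ℝ² defined by ξ₀(t,x) = (t, L(t)·x + (1 − L(t))·ξ̄(x)) is C^r and, for every 0 ≤ j ≤ r and every point p ∈ [0,1]×[0,1], the j-th iterated Fréchet derivative of the map q ↦ ξ₀(q) − q at p has operator norm < ε. -/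
open Set Finset

/-- The inclusion `y ↦ (0, y)` has operator norm at most one. -/
lemma water_slide_norm_inr_le_one :
    ‖(ContinuousLinearMap.inr ℝ ℝ ℝ)‖ ≤ 1 := by
  refine ContinuousLinearMap.opNorm_le_bound _ zero_le_one fun x => ?_
  simp [Prod.norm_def, abs_nonneg]

/-- Fix an integer `r ≥ 1` and a smooth function `L : ℝ → ℝ`. For every `ε > 0` there
exists `δ > 0` such that: for every `C^r` function `ξ̄ : ℝ → ℝ` whose derivatives of
orders `0 ≤ j ≤ r` of `y ↦ ξ̄ y - y` are `< δ` in absolute value on `[0,1]`, the map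
`ξ₀ (t, x) = (t, L t * x + (1 - L t) * ξ̄ x)` is `C^r` and all iterated Fréchet
derivatives of orders `0 ≤ j ≤ r` of `q ↦ ξ₀ q - q` have operator norm `< ε` at every
point of `[0,1] × [0,1]`. -/
theorem water_slide_interpolation_close_to_id
    (r : ℕ) (hr : 1 ≤ r) (L : ℝ → ℝ) (hL : ContDiff ℝ (⊤ : ℕ∞) L) :
    ∀ ε > (0 : ℝ), ∃ δ > (0 : ℝ),
      ∀ ξbar : ℝ → ℝ, ContDiff ℝ r ξbar →
        (∀ j ≤ r, ∀ x ∈ Set.Icc (0 : ℝ) 1,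
          |iteratedDeriv j (fun y => ξbar y - y) x| < δ) →
        ContDiff ℝ r (fun p : ℝ × ℝ => (p.1, L p.1 * p.2 + (1 - L p.1) * ξbar p.2)) ∧
        ∀ j ≤ r, ∀ p ∈ Set.Icc (0 : ℝ) 1 ×ˢ Set.Icc (0 : ℝ) 1,
          ‖iteratedFDeriv ℝ j
              (fun q : ℝ × ℝ =>
                ((q.1, L q.1 * q.2 + (1 - L q.1) * ξbar q.2) : ℝ × ℝ) - q) p‖ < ε := by
  intro ε hε
  set f : ℝ → ℝ := fun t => 1 - L t with hfdef
  have hfC : ContDiff ℝ (⊤ : ℕ∞) f := contDiff_const.sub hL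
  have hfCr : ContDiff ℝ r f := hfC.of_le (by exact_mod_cast le_top)
  -- uniform bound on all derivatives of `f` of order `≤ r` on `[0,1]`
  obtain ⟨M, hM⟩ : ∃ M : ℝ, ∀ i ≤ r, ∀ t ∈ Icc (0 : ℝ) 1,
      ‖iteratedFDeriv ℝ i f t‖ ≤ M := by
    have hc : ContinuousOn
        (fun t => ∑ i ∈ range (r + 1), ‖iteratedFDeriv ℝ i f t‖) (Icc (0 : ℝ) 1) := by
      refine (continuous_finset_sum _ fun i _ => ?_).continuousOn
      exact (hfC.continuous_iteratedFDeriv (by exact_mod_cast le_top)).norm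
    obtain ⟨M, hM⟩ := isCompact_Icc.exists_bound_of_continuousOn hc
    refine ⟨M, fun i hi t ht => ?_⟩
    have h1 : ‖iteratedFDeriv ℝ i f t‖ ≤
        ∑ k ∈ range (r + 1), ‖iteratedFDeriv ℝ k f t‖ :=
      Finset.single_le_sum (f := fun k => ‖iteratedFDeriv ℝ k f t‖)
        (fun k _ => norm_nonneg _) (by simpa using Nat.lt_succ_of_le hi)
    have h2 := hM t ht
    rw [Real.norm_eq_abs] at h2
    exact h1.trans ((le_abs_self _).trans h2)
  set M' : ℝ := max M 1 with hM'def
  have hM'pos : (0 : ℝ) < M' := lt_of_lt_of_le one_pos (le_max_right _ _)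
  have hMM' : ∀ i ≤ r, ∀ t ∈ Icc (0 : ℝ) 1, ‖iteratedFDeriv ℝ i f t‖ ≤ M' :=
    fun i hi t ht => (hM i hi t ht).trans (le_max_left _ _)
  have hden : (0 : ℝ) < 2 ^ r * M' := by positivity
  refine ⟨ε / (2 ^ r * M'), div_pos hε hden, ?_⟩
  intro ξbar hξ hsmall
  set g : ℝ → ℝ := fun y => ξbar y - y with hgdef
  have hgC : ContDiff ℝ r g := hξ.sub contDiff_id
  have hLr : ContDiff ℝ r L := hL.of_le (by exact_mod_cast le_top)
  constructor
  · exact contDiff_fst.prodMk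
      (((hLr.comp contDiff_fst).mul contDiff_snd).add
        ((contDiff_const.sub (hLr.comp contDiff_fst)).mul (hξ.comp contDiff_snd)))
  · intro j hj p hp
    -- rewrite the difference map
    have hfun : (fun q : ℝ × ℝ =>
        ((q.1, L q.1 * q.2 + (1 - L q.1) * ξbar q.2) : ℝ × ℝ) - q) =
        (ContinuousLinearMap.inr ℝ ℝ ℝ) ∘ (fun q : ℝ × ℝ => f q.1 * g q.2) := by
      funext q
      refine Prod.ext (by simp) ?_
      show L q.1 * q.2 + (1 - L q.1) * ξbar q.2 - q.2 = (1 - L q.1) * (ξbar q.2 - q.2)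
      ring
    have hF : ContDiff ℝ r (f ∘ Prod.fst : ℝ × ℝ → ℝ) := hfCr.comp contDiff_fst
    have hG : ContDiff ℝ r (g ∘ Prod.snd : ℝ × ℝ → ℝ) := hgC.comp contDiff_snd
    have hh : ContDiff ℝ r (fun q : ℝ × ℝ => f q.1 * g q.2) := hF.mul hG
    rw [hfun, ContinuousLinearMap.iteratedFDeriv_comp_left _ hh.contDiffAt
      (by exact_mod_cast hj)]
    have hstep1 : ‖(ContinuousLinearMap.inr ℝ ℝ ℝ).compContinuousMultilinearMap
        (iteratedFDeriv ℝ j (fun q : ℝ × ℝ => f q.1 * g q.2) p)‖ ≤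
        ‖iteratedFDeriv ℝ j (fun q : ℝ × ℝ => f q.1 * g q.2) p‖ := by
      refine ((ContinuousLinearMap.inr ℝ ℝ ℝ).norm_compContinuousMultilinearMap_le _).trans ?_
      calc ‖(ContinuousLinearMap.inr ℝ ℝ ℝ)‖ * ‖iteratedFDeriv ℝ j _ p‖
          ≤ 1 * ‖iteratedFDeriv ℝ j (fun q : ℝ × ℝ => f q.1 * g q.2) p‖ :=
            mul_le_mul_of_nonneg_right water_slide_norm_inr_le_one (norm_nonneg _)
        _ = _ := one_mul _
    refine hstep1.trans_lt ?_
    have hmul := norm_iteratedFDeriv_mul_le (𝕜 := ℝ)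
      (f := f ∘ Prod.fst) (g := g ∘ Prod.snd) hF hG p (n := j) (by exact_mod_cast hj)
    refine lt_of_le_of_lt hmul ?_
    have hδ : (0 : ℝ) < ε / (2 ^ r * M') := div_pos hε hden
    -- each term is strictly less than `choose j i * (M' * δ)`
    have hterm : ∀ i ∈ range (j + 1),
        (j.choose i : ℝ) * ‖iteratedFDeriv ℝ i (f ∘ Prod.fst) p‖ *
          ‖iteratedFDeriv ℝ (j - i) (g ∘ Prod.snd) p‖ <
        (j.choose i : ℝ) * (M' * (ε / (2 ^ r * M'))) := by
      intro i hi
      rw [Finset.mem_range, Nat.lt_succ_iff] at hi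
      have hir : i ≤ r := hi.trans hj
      -- bound for the `f` factor
      have hFb : ‖iteratedFDeriv ℝ i (f ∘ Prod.fst) p‖ ≤ M' := by
        rw [show (f ∘ Prod.fst : ℝ × ℝ → ℝ) = f ∘ ⇑(ContinuousLinearMap.fst ℝ ℝ ℝ) from rfl,
          ContinuousLinearMap.iteratedFDeriv_comp_right
          (ContinuousLinearMap.fst ℝ ℝ ℝ) hfCr p (by exact_mod_cast hir)]
        refine (ContinuousMultilinearMap.norm_compContinuousLinearMap_le _ _).trans ?_
        have hp1 : (ContinuousLinearMap.fst ℝ ℝ ℝ) p ∈ Icc (0 : ℝ) 1 := hp.1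
        have h1 : ∏ _k : Fin i, ‖(ContinuousLinearMap.fst ℝ ℝ ℝ)‖ ≤ 1 := by
          refine Finset.prod_le_one (fun _ _ => norm_nonneg _) (fun _ _ => ?_)
          exact ContinuousLinearMap.norm_fst_le ℝ ℝ ℝ
        calc ‖iteratedFDeriv ℝ i f ((ContinuousLinearMap.fst ℝ ℝ ℝ) p)‖ *
              ∏ _k : Fin i, ‖(ContinuousLinearMap.fst ℝ ℝ ℝ)‖
            ≤ ‖iteratedFDeriv ℝ i f ((ContinuousLinearMap.fst ℝ ℝ ℝ) p)‖ * 1 :=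
              mul_le_mul_of_nonneg_left h1 (norm_nonneg _)
          _ = ‖iteratedFDeriv ℝ i f ((ContinuousLinearMap.fst ℝ ℝ ℝ) p)‖ := mul_one _
          _ ≤ M' := hMM' i hir _ hp1
      -- bound for the `g` factor
      have hGb : ‖iteratedFDeriv ℝ (j - i) (g ∘ Prod.snd) p‖ <
          ε / (2 ^ r * M') := by
        rw [show (g ∘ Prod.snd : ℝ × ℝ → ℝ) = g ∘ ⇑(ContinuousLinearMap.snd ℝ ℝ ℝ) from rfl,
          ContinuousLinearMap.iteratedFDeriv_comp_right
          (ContinuousLinearMap.snd ℝ ℝ ℝ) hgC p (by exact_mod_cast (Nat.sub_le j i).trans hj)]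
        refine lt_of_le_of_lt
          (ContinuousMultilinearMap.norm_compContinuousLinearMap_le _ _) ?_
        have hp2 : (ContinuousLinearMap.snd ℝ ℝ ℝ) p ∈ Icc (0 : ℝ) 1 := hp.2
        have h1 : ∏ _k : Fin (j - i), ‖(ContinuousLinearMap.snd ℝ ℝ ℝ)‖ ≤ 1 := by
          refine Finset.prod_le_one (fun _ _ => norm_nonneg _) (fun _ _ => ?_)
          exact ContinuousLinearMap.norm_snd_le ℝ ℝ ℝ
        have h2 : ‖iteratedFDeriv ℝ (j - i) g ((ContinuousLinearMap.snd ℝ ℝ ℝ) p)‖ <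
            ε / (2 ^ r * M') := by
          rw [norm_iteratedFDeriv_eq_norm_iteratedDeriv, Real.norm_eq_abs]
          exact hsmall (j - i) ((Nat.sub_le j i).trans hj) _ hp2
        calc ‖iteratedFDeriv ℝ (j - i) g ((ContinuousLinearMap.snd ℝ ℝ ℝ) p)‖ *
              ∏ _k : Fin (j - i), ‖(ContinuousLinearMap.snd ℝ ℝ ℝ)‖
            ≤ ‖iteratedFDeriv ℝ (j - i) g ((ContinuousLinearMap.snd ℝ ℝ ℝ) p)‖ * 1 :=
              mul_le_mul_of_nonneg_left h1 (norm_nonneg _)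
          _ = ‖iteratedFDeriv ℝ (j - i) g ((ContinuousLinearMap.snd ℝ ℝ ℝ) p)‖ := mul_one _
          _ < ε / (2 ^ r * M') := h2
      have hchoosepos : (0 : ℝ) < (j.choose i : ℝ) := by
        exact_mod_cast Nat.choose_pos hi
      have hab : ‖iteratedFDeriv ℝ i (f ∘ Prod.fst) p‖ *
          ‖iteratedFDeriv ℝ (j - i) (g ∘ Prod.snd) p‖ < M' * (ε / (2 ^ r * M')) := by
        calc ‖iteratedFDeriv ℝ i (f ∘ Prod.fst) p‖ *
              ‖iteratedFDeriv ℝ (j - i) (g ∘ Prod.snd) p‖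
            ≤ M' * ‖iteratedFDeriv ℝ (j - i) (g ∘ Prod.snd) p‖ :=
              mul_le_mul_of_nonneg_right hFb (norm_nonneg _)
          _ < M' * (ε / (2 ^ r * M')) := by
              exact mul_lt_mul_of_pos_left hGb hM'pos
      calc (j.choose i : ℝ) * ‖iteratedFDeriv ℝ i (f ∘ Prod.fst) p‖ *
            ‖iteratedFDeriv ℝ (j - i) (g ∘ Prod.snd) p‖
          = (j.choose i : ℝ) * (‖iteratedFDeriv ℝ i (f ∘ Prod.fst) p‖ *
            ‖iteratedFDeriv ℝ (j - i) (g ∘ Prod.snd) p‖) := by ring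
        _ < (j.choose i : ℝ) * (M' * (ε / (2 ^ r * M'))) :=
            mul_lt_mul_of_pos_left hab hchoosepos
    have hsum : ∑ i ∈ range (j + 1),
        (j.choose i : ℝ) * ‖iteratedFDeriv ℝ i (f ∘ Prod.fst) p‖ *
          ‖iteratedFDeriv ℝ (j - i) (g ∘ Prod.snd) p‖ <
        ∑ i ∈ range (j + 1), (j.choose i : ℝ) * (M' * (ε / (2 ^ r * M'))) :=
      Finset.sum_lt_sum_of_nonempty Finset.nonempty_range_add_one hterm
    refine hsum.trans_le ?_
    have hchoosesum : ∑ i ∈ range (j + 1), (j.choose i : ℝ) = (2 : ℝ) ^ j := by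
      rw [← Nat.cast_sum, Nat.sum_range_choose]
      push_cast
      ring
    rw [← Finset.sum_mul, hchoosesum]
    have h2j : (2 : ℝ) ^ j ≤ (2 : ℝ) ^ r :=
      pow_le_pow_right₀ one_le_two hj
    calc (2 : ℝ) ^ j * (M' * (ε / (2 ^ r * M')))
        ≤ (2 : ℝ) ^ r * (M' * (ε / (2 ^ r * M'))) := by
          refine mul_le_mul_of_nonneg_right h2j ?_
          positivity
      _ = ε := by field_simp
end

section
/- Fix integers m ≥ 2 and r ≥ 1, and real numbers t₀ ∈ (0,1), t₁ ∈ (0,1) and ε > 0. Then there exists δ > 0 such that for every C^r function ξ̄ : ℝ → ℝ with ξ̄([0,1]) ⊆ [0,1], ξ̄(t₀) = t₀, and such that for all 0 ≤ j ≤ r and all x ∈ [0,1] the j-th derivative of y ↦ ξ̄(y) − y at x has absolute value < δ, there exist η ∈ (0, t₁) and a C^r map ξ : ℝ^m → ℝ^m with ξ([0,1]^m) ⊆ [0,1]^m satisfying, for points y = (y₁,…,y_m): (a) ξ(y)ᵢ = yᵢ for every coordinate index 1 ≤ i ≤ m−1 and every y; (b) ξ(y) = y whenever y_{m−1} ≤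 η; (c) the last coordinate of ξ(y) equals ξ̄(y_m) whenever y_{m−1} ≥ t₁ (in particular, on the face y_{m−1} = 1, ξ slides each height a ∈ [0,1] to the height ξ̄(a)); (d) ξ(y) = y whenever y_m = t₀; (e) for every 0 ≤ j ≤ r and every y ∈ [0,1]^m, the j-th iterated Fréchet derivative of the map z ↦ ξ(z) − z at y has operator norm < ε. -/
/-!
Take `ξ y = y + φ (y_{m-1}) (ξ̄ (y_m) - y_m) e_m`, where `φ` is a smooth ramp equal to `0` below
`η = t₁ / 2` and to `1` above `t₁`. Everything except closeness is read off this formula, and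
closeness follows from the Leibniz rule: the `j`-th derivative of `ξ - id` is bounded by
`2 ^ j` times a bound `C` for the first `r` derivatives of `φ` on `[0,1]` times a bound for those
of `ξ̄ - id`, so `δ = ε / (2 ^ r (C + 1))` works.
-/

section LeibnizBound

variable {𝕜 E A : Type*} [NontriviallyNormedField 𝕜] [NormedAddCommGroup E] [NormedSpace 𝕜 E]
  [NormedRing A] [NormedAlgebra 𝕜 A]

theorem norm_iteratedFDeriv_mul_le_of_forall_le {f g : E → A} {N : WithTop ℕ∞}
    (hf : ContDiff 𝕜 N f) (hg : ContDiff 𝕜 N g) (x : E) {n : ℕ} (hn : n ≤ N) {a b : ℝ}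
    (ha : ∀ i ≤ n, ‖iteratedFDeriv 𝕜 i f x‖ ≤ a) (hb : ∀ i ≤ n, ‖iteratedFDeriv 𝕜 i g x‖ ≤ b) :
    ‖iteratedFDeriv 𝕜 n (fun y => f y * g y) x‖ ≤ 2 ^ n * a * b := by
  have ha₀ : 0 ≤ a := (norm_nonneg _).trans (ha 0 n.zero_le)
  calc ‖iteratedFDeriv 𝕜 n (fun y => f y * g y) x‖
      ≤ ∑ i ∈ Finset.range (n + 1), (n.choose i : ℝ) *
          ‖iteratedFDeriv 𝕜 i f x‖ * ‖iteratedFDeriv 𝕜 (n - i) g x‖ :=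
        norm_iteratedFDeriv_mul_le hf hg x hn
    _ ≤ ∑ i ∈ Finset.range (n + 1), (n.choose i : ℝ) * a * b := by
        gcongr with i hi
        · exact ha i (Nat.lt_succ_iff.mp (Finset.mem_range.mp hi))
        · exact hb (n - i) (n.sub_le i)
    _ = 2 ^ n * a * b := by
        rw [← Finset.sum_mul, ← Finset.sum_mul, ← Nat.cast_sum, Nat.sum_range_choose]
        push_cast; ring

end LeibnizBound

theorem ContinuousLinearMap.norm_iteratedFDeriv_comp_right_le {𝕜 E F G : Type*}
    [NontriviallyNormedField 𝕜] [NormedAddCommGroup E] [NormedSpace 𝕜 E]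
    [NormedAddCommGroup F] [NormedSpace 𝕜 F] [NormedAddCommGroup G] [NormedSpace 𝕜 G]
    (L : G →L[𝕜] E) {f : E → F} {N : WithTop ℕ∞} (hf : ContDiff 𝕜 N f) (x : G) {n : ℕ}
    (hn : n ≤ N) :
    ‖iteratedFDeriv 𝕜 n (f ∘ L) x‖ ≤ ‖iteratedFDeriv 𝕜 n f (L x)‖ * ‖L‖ ^ n := by
  rw [L.iteratedFDeriv_comp_right hf x hn]
  simpa using (iteratedFDeriv 𝕜 n f (L x)).norm_compContinuousLinearMap_le fun _ : Fin n => L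

theorem EuclideanSpace.norm_iteratedFDeriv_comp_apply_le {ι F : Type*} [Fintype ι]
    [NormedAddCommGroup F] [NormedSpace ℝ F] {f : ℝ → F} {N : WithTop ℕ∞} (hf : ContDiff ℝ N f)
    (i : ι) (y : EuclideanSpace ℝ ι) {n : ℕ} (hn : n ≤ N) :
    ‖iteratedFDeriv ℝ n (fun z : EuclideanSpace ℝ ι => f (z i)) y‖ ≤
      ‖iteratedDeriv n f (y i)‖ := by
  let π : EuclideanSpace ℝ ι →L[ℝ] ℝ := EuclideanSpace.proj i
  have hπ : ‖π‖ ≤ 1 :=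
    π.opNorm_le_bound zero_le_one fun z => by simpa [π] using PiLp.norm_apply_le z i
  calc ‖iteratedFDeriv ℝ n (f ∘ π) y‖ ≤ ‖iteratedFDeriv ℝ n f (y i)‖ * ‖π‖ ^ n :=
        π.norm_iteratedFDeriv_comp_right_le hf y hn
    _ ≤ ‖iteratedDeriv n f (y i)‖ := by
        rw [norm_iteratedFDeriv_eq_norm_iteratedDeriv]
        exact mul_le_of_le_one_right (norm_nonneg _) (pow_le_one₀ (norm_nonneg _) hπ)

theorem IsCompact.exists_forall_norm_iteratedDeriv_le {𝕜 F : Type*} [NontriviallyNormedField 𝕜]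
    [NormedAddCommGroup F] [NormedSpace 𝕜 F] {f : 𝕜 → F} {r : ℕ} (hf : ContDiff 𝕜 r f)
    {K : Set 𝕜} (hK : IsCompact K) :
    ∃ C, 0 ≤ C ∧ ∀ j ≤ r, ∀ x ∈ K, ‖iteratedDeriv j f x‖ ≤ C := by
  have hcont : Continuous fun x => ∑ j ∈ Finset.range (r + 1), ‖iteratedDeriv j f x‖ :=
    continuous_finsetSum _ fun j hj =>
      (hf.continuous_iteratedDeriv j (by exact_mod_cast Finset.mem_range_succ_iff.mp hj)).norm
  obtain ⟨C, hC⟩ := hK.exists_bound_of_continuousOn hcont.continuousOn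
  refine ⟨max C 0, le_max_right _ _, fun j hj x hx => ?_⟩
  calc ‖iteratedDeriv j f x‖ ≤ ∑ j ∈ Finset.range (r + 1), ‖iteratedDeriv j f x‖ :=
        Finset.single_le_sum (f := fun j => ‖iteratedDeriv j f x‖) (fun _ _ => norm_nonneg _)
          (Finset.mem_range_succ_iff.mpr hj)
    _ ≤ C := (Real.le_norm_self _).trans (hC x hx)
    _ ≤ max C 0 := le_max_left _ _

namespace Real

noncomputable def smoothRamp (a b x : ℝ) : ℝ := smoothTransition ((x - a) / (b - a))

variable {a b x : ℝ}

theorem contDiff_smoothRamp {n : ℕ∞} : ContDiff ℝ n (smoothRamp a b) :=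
  smoothTransition.contDiff.comp ((contDiff_id.sub contDiff_const).div_const _)

theorem smoothRamp_of_le (hab : a ≤ b) (hx : x ≤ a) : smoothRamp a b x = 0 :=
  smoothTransition.zero_of_nonpos (div_nonpos_of_nonpos_of_nonneg (by linarith) (by linarith))

theorem smoothRamp_of_ge (hab : a < b) (hx : b ≤ x) : smoothRamp a b x = 1 :=
  smoothTransition.one_of_one_le <| (one_le_div (by linarith)).mpr (by linarith)

theorem smoothRamp_mem_Icc : smoothRamp a b x ∈ Set.Icc 0 1 :=
  ⟨smoothTransition.nonneg _, smoothTransition.le_one _⟩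

end Real

section WaterSlide

variable {ι : Type*} [DecidableEq ι]

noncomputable def waterSlide (i j : ι) (φ f : ℝ → ℝ) (y : EuclideanSpace ℝ ι) :
    EuclideanSpace ℝ ι :=
  y + (φ (y i) * (f (y j) - y j)) • EuclideanSpace.single j 1

variable {i j k : ι} {φ f : ℝ → ℝ} {y : EuclideanSpace ℝ ι}

theorem waterSlide_apply :
    waterSlide i j φ f y k = y k + if k = j then φ (y i) * (f (y j) - y j) else 0 := by
  by_cases hk : k = j <;> simp [waterSlide, hk]

theorem waterSlide_apply_of_ne (hk : k ≠ j) : waterSlide i j φ f y k = y k := by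
  simp [waterSlide_apply, hk]

theorem waterSlide_apply_self_of_eq_one (h : φ (y i) = 1) : waterSlide i j φ f y j = f (y j) := by
  simp [waterSlide_apply, h]

theorem waterSlide_eq_self (h : φ (y i) = 0 ∨ f (y j) = y j) : waterSlide i j φ f y = y := by
  rcases h with h | h <;> simp [waterSlide, h]

theorem contDiff_waterSlide [Fintype ι] {N : WithTop ℕ∞} (hφ : ContDiff ℝ N φ)
    (hf : ContDiff ℝ N f) :
    ContDiff ℝ N (waterSlide i j φ f) := by
  have hcoord : ∀ l : ι, ContDiff ℝ N fun z : EuclideanSpace ℝ ι => z l :=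
    fun l => (EuclideanSpace.proj (𝕜 := ℝ) l).contDiff
  exact contDiff_id.add <| ((hφ.comp (hcoord i)).mul
    ((hf.comp (hcoord j)).sub (hcoord j))).smul contDiff_const

theorem waterSlide_mem_of_convex [Fintype ι] {s : Set ℝ} (hs : Convex ℝ s)
    (hφ : ∀ t, φ t ∈ Set.Icc 0 1) (hf : Set.MapsTo f s s) (hy : ∀ l, y l ∈ s) (l : ι) :
    waterSlide i j φ f y l ∈ s := by
  rw [waterSlide_apply]
  split_ifs with hl
  · subst hl
    simpa [smul_eq_mul] using hs.add_smul_sub_mem (hy l) (hf (hy l)) (hφ (y i))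
  · simpa using hy l

theorem norm_iteratedFDeriv_waterSlide_sub_le [Fintype ι] {N : WithTop ℕ∞}
    (hφ : ContDiff ℝ N φ) (hf : ContDiff ℝ N f) {n : ℕ} (hn : n ≤ N) {a b : ℝ}
    (ha : ∀ k ≤ n, ‖iteratedDeriv k φ (y i)‖ ≤ a)
    (hb : ∀ k ≤ n, ‖iteratedDeriv k (fun t => f t - t) (y j)‖ ≤ b) :
    ‖iteratedFDeriv ℝ n (fun z => waterSlide i j φ f z - z) y‖ ≤ 2 ^ n * a * b := by
  set T := ContinuousLinearMap.toSpanSingleton ℝ (EuclideanSpace.single j (1 : ℝ))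
  have hT : ‖T‖ = 1 := by simp [T]
  have hg : ContDiff ℝ N fun t => f t - t := hf.sub contDiff_id
  have hu : ContDiff ℝ N fun z : EuclideanSpace ℝ ι => φ (z i) :=
    hφ.comp (EuclideanSpace.proj (𝕜 := ℝ) i).contDiff
  have hv : ContDiff ℝ N fun z : EuclideanSpace ℝ ι => f (z j) - z j :=
    hg.comp (EuclideanSpace.proj (𝕜 := ℝ) j).contDiff
  have hsub : (fun z => waterSlide i j φ f z - z) = T ∘ fun z => φ (z i) * (f (z j) - z j) := by
    ext z : 1; simp [waterSlide, T]
  have hle : ∀ k ≤ n, (k : WithTop ℕ∞) ≤ N := fun k hk => (Nat.cast_le.mpr hk).trans hn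
  rw [hsub]
  calc _ ≤ ‖T‖ * ‖iteratedFDeriv ℝ n (fun z => φ (z i) * (f (z j) - z j)) y‖ :=
        T.norm_iteratedFDeriv_comp_left (hu.mul hv).contDiffAt hn
    _ ≤ 2 ^ n * a * b := by
        rw [hT, one_mul]
        exact norm_iteratedFDeriv_mul_le_of_forall_le hu hv y hn
          (fun k hk => (EuclideanSpace.norm_iteratedFDeriv_comp_apply_le hφ i y
            (hle k hk)).trans (ha k hk))
          (fun k hk => (EuclideanSpace.norm_iteratedFDeriv_comp_apply_le hg j y
            (hle k hk)).trans (hb k hk))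

end WaterSlide

/-- The water slide lemma: from a one-dimensional `C^r` map `ξ̄` close to the identity,
fixing `t₀` and preserving `[0,1]`, one produces an `m`-dimensional `C^r` water slide
function `ξ`, close to the identity, which fixes the first `m-1` coordinates, is the
identity for `y_{m-1} ≤ η`, slides heights by `ξ̄` for `y_{m-1} ≥ t₁`, and fixes the
hyperplane at height `t₀`. (Coordinates are `0`-indexed: `y_{m-1}` is coordinate
`m-2` and `y_m` is coordinate `m-1`.) -/
theorem water_slide_function_exists
    (m r : ℕ) (hm : 2 ≤ m)
    (t₀ t₁ : ℝ) (ht₁ : t₁ ∈ Set.Ioo (0 : ℝ) 1)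
    (ε : ℝ) (hε : 0 < ε) :
    ∃ δ > (0 : ℝ),
      ∀ ξbar : ℝ → ℝ, ContDiff ℝ r ξbar →
        (Set.MapsTo ξbar (Set.Icc (0 : ℝ) 1) (Set.Icc (0 : ℝ) 1)) →
        ξbar t₀ = t₀ →
        (∀ j ≤ r, ∀ x ∈ Set.Icc (0 : ℝ) 1,
          |iteratedDeriv j (fun y => ξbar y - y) x| < δ) →
        ∃ η : ℝ, 0 < η ∧ η < t₁ ∧
        ∃ ξ : EuclideanSpace ℝ (Fin m) → EuclideanSpace ℝ (Fin m),
          ContDiff ℝ r ξ ∧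
          -- ξ maps the unit cube into the unit cube
          (∀ y : EuclideanSpace ℝ (Fin m), (∀ i, y i ∈ Set.Icc (0 : ℝ) 1) →
            ∀ i, ξ y i ∈ Set.Icc (0 : ℝ) 1) ∧
          -- (a) ξ fixes every coordinate except the last
          (∀ y : EuclideanSpace ℝ (Fin m), ∀ i : Fin m, (i : ℕ) < m - 1 →
            ξ y i = y i) ∧
          -- (b) ξ is the identity where the coordinate y_{m-1} is ≤ η
          (∀ y : EuclideanSpace ℝ (Fin m), y ⟨m - 2, by omega⟩ ≤ η → ξ y = y) ∧
          -- (c) where y_{m-1} ≥ t₁, the last coordinate of ξ y equals ξ̄ applied to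
          -- the last coordinate of y
          (∀ y : EuclideanSpace ℝ (Fin m), t₁ ≤ y ⟨m - 2, by omega⟩ →
            ξ y ⟨m - 1, by omega⟩ = ξbar (y ⟨m - 1, by omega⟩)) ∧
          -- (d) ξ fixes the hyperplane at height t₀
          (∀ y : EuclideanSpace ℝ (Fin m), y ⟨m - 1, by omega⟩ = t₀ → ξ y = y) ∧
          -- (e) ξ is C^r-close to the identity on the unit cube
          (∀ j ≤ r, ∀ y : EuclideanSpace ℝ (Fin m),
            (∀ i, y i ∈ Set.Icc (0 : ℝ) 1) →
            ‖iteratedFDeriv ℝ j (fun z => ξ z - z) y‖ < ε) := by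
  set η := t₁ / 2
  have hη : 0 < η ∧ η < t₁ := ⟨half_pos ht₁.1, half_lt_self ht₁.1⟩
  have hφ : ContDiff ℝ r (Real.smoothRamp η t₁) := Real.contDiff_smoothRamp (n := r)
  obtain ⟨C, hC, hφC⟩ := isCompact_Icc.exists_forall_norm_iteratedDeriv_le hφ (K := Set.Icc 0 1)
  refine ⟨ε / (2 ^ r * (C + 1)), by positivity, fun ξbar hξ hmaps hfix hclose => ?_⟩
  refine ⟨η, hη.1, hη.2,
    waterSlide ⟨m - 2, by omega⟩ ⟨m - 1, by omega⟩ (Real.smoothRamp η t₁) ξbar,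
    contDiff_waterSlide hφ hξ,
    fun y hy =>
      waterSlide_mem_of_convex (convex_Icc 0 1) (fun _ => Real.smoothRamp_mem_Icc) hmaps hy,
    fun y i hi => waterSlide_apply_of_ne (Fin.ne_of_val_ne hi.ne),
    fun y hy => waterSlide_eq_self (.inl (Real.smoothRamp_of_le hη.2.le hy)),
    fun y hy => waterSlide_apply_self_of_eq_one (Real.smoothRamp_of_ge hη.2 hy),
    fun y hy => waterSlide_eq_self (.inr (hy ▸ hfix)),
    fun j hj y hy => ?_⟩
  calc _ ≤ 2 ^ j * C * (ε / (2 ^ r * (C + 1))) :=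
        norm_iteratedFDeriv_waterSlide_sub_le hφ hξ (by exact_mod_cast hj)
          (fun k hk => hφC k (hk.trans hj) _ (hy _))
          (fun k hk => (hclose k (hk.trans hj) _ (hy _)).le)
    _ ≤ 2 ^ r * C * (ε / (2 ^ r * (C + 1))) := by gcongr; norm_num
    _ < 2 ^ r * (C + 1) * (ε / (2 ^ r * (C + 1))) := by gcongr; linarith
    _ = ε := by field_simp
end
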